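/- arXiv:1405.6065 — 6 statements merged into one kernel-verified Lean document; each statement's English description precedes it below -/
import Mathlib

section
/- Let g be a real Lie algebra with inner product ⟨·,·⟩ and J an almost-complex structure (J² = -I) compatible with the inner product, and suppose Ric^{ac} (the anti-J-invariant part of the Ricci operator, i.e. Ric^{ac} = ½(Ric + J∘Ric∘J)) satisfies Ric^{ac} = cI + D for some c ∈ ℝ and D ∈ Der(g). If tr(Ric ∘ D) = 0 (which holds when g is unimodular), then c·tr(Ric) = tr((Ric^{ac})²). -/
open scoped RealInnerProductSpace

/-- If the anti-J-invariant part `Ricac = ½(Ric + J ∘ Ric ∘ J)` of the Ricci operator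
equals `c•I + D` for a derivation `D`, and `tr(Ric ∘ D) = 0` (e.g. when `g` is unimodular),
then `c · tr(Ric) = tr(Ricac²)`. -/
theorem stmt0 (V : Type*) [NormedAddCommGroup V] [InnerProductSpace ℝ V]
    [FiniteDimensional ℝ V] [LieRing V] [LieAlgebra ℝ V]
    (Ric J D : V →ₗ[ℝ] V) (c : ℝ)
    (hRicSym : ∀ x y : V, ⟪Ric x, y⟫ = ⟪x, Ric y⟫)
    (hJ2 : J ∘ₗ J = -LinearMap.id)
    (hJorth : ∀ x y : V, ⟪J x, J y⟫ = ⟪x, y⟫)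
    (hD : ∀ x y : V, D ⁅x, y⁆ = ⁅D x, y⁆ + ⁅x, D y⁆)
    (hsol : (1/2 : ℝ) • (Ric + J ∘ₗ Ric ∘ₗ J) = c • LinearMap.id + D)
    (htr : LinearMap.trace ℝ V (Ric ∘ₗ D) = 0) :
    c * LinearMap.trace ℝ V Ric =
      LinearMap.trace ℝ V
        (((1/2 : ℝ) • (Ric + J ∘ₗ Ric ∘ₗ J)) ∘ₗ ((1/2 : ℝ) • (Ric + J ∘ₗ Ric ∘ₗ J))) := by
  set T := LinearMap.trace ℝ V with hT
  have tmc : ∀ f g : V →ₗ[ℝ] V, T (f * g) = T (g * f) := fun f g =>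
    LinearMap.trace_mul_comm ℝ f g
  have hJ2' : J * J = -1 := by
    rw [Module.End.mul_eq_comp, hJ2]; rfl
  have h1 : ∀ X : V →ₗ[ℝ] V, T (J * X * J) = - T X := by
    intro X
    calc T (J * X * J) = T ((X * J) * J) := by rw [mul_assoc, tmc]
      _ = T (X * (J * J)) := by rw [mul_assoc]
      _ = - T X := by rw [hJ2', mul_neg, mul_one, map_neg]
  set B : V →ₗ[ℝ] V := Ric + J * Ric * J with hB
  have hBc : Ric + J ∘ₗ Ric ∘ₗ J = B := by
    rw [hB]; congr 1
  have h2 : T ((J * Ric * J) * (J * Ric * J)) = T (Ric * Ric) := by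
    have e : (J * Ric * J) * (J * Ric * J) = -(J * (Ric * Ric) * J) := by
      have : (J * Ric * J) * (J * Ric * J) = J * Ric * (J * J) * Ric * J := by
        noncomm_ring
      rw [this, hJ2']; noncomm_ring
    rw [e, map_neg, h1]; ring
  have tB : T B = 0 := by
    rw [hB, map_add, h1]; ring
  have hAD : (1/2 : ℝ) • B = c • (1 : V →ₗ[ℝ] V) + D := by
    rw [← hBc, hsol, Module.End.one_eq_id]
  -- T(B*B)
  have hBB : T (B * B) = 2 * T (Ric * Ric) + 2 * T ((J * Ric * J) * Ric) := by
    rw [hB]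
    rw [add_mul, mul_add, mul_add, map_add, map_add, map_add, h2]
    rw [tmc Ric (J * Ric * J)]
    ring
  have hJBA : T ((J * Ric * J) * B) = T (Ric * Ric) + T ((J * Ric * J) * Ric) := by
    rw [hB, mul_add, map_add, h2]; ring
  -- T(B*D)
  have hBD : T (B * D) = T ((J * Ric * J) * D) := by
    rw [hB, add_mul, map_add]
    have : T (Ric * D) = 0 := htr
    rw [this, zero_add]
  have hD2 : D = (1/2 : ℝ) • B - c • (1 : V →ₗ[ℝ] V) := by
    rw [hAD]; abel
  have hJD : T ((J * Ric * J) * D) = (1/2) * T ((J * Ric * J) * B) + c * T Ric := by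
    rw [hD2, mul_sub, map_sub, mul_smul_comm, mul_smul_comm, map_smul, map_smul,
      mul_one, smul_eq_mul, smul_eq_mul, h1]
    ring
  have hBB2 : T (B * B) = T (B * D) * 2 := by
    have : B * ((1/2 : ℝ) • B) = B * (c • (1 : V →ₗ[ℝ] V) + D) := by rw [hAD]
    have e : (1/2 : ℝ) * T (B * B) = c * T B + T (B * D) := by
      have := congrArg T this
      rwa [mul_add, mul_smul_comm, mul_smul_comm, map_add, map_smul, map_smul,
        mul_one, smul_eq_mul, smul_eq_mul] at this
    rw [tB] at e; linarith
  -- assemble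
  have key : T (B * B) = 2 * c * T Ric + T (Ric * Ric) + T ((J * Ric * J) * Ric) := by
    rw [hBB2, hBD, hJD, hJBA]; ring
  have final : T (B * B) = 4 * (c * T Ric) := by
    rw [hBB] at key; linarith [hBB, key]
  -- rewrite goal
  have goalE : ((1/2 : ℝ) • (Ric + J ∘ₗ Ric ∘ₗ J)) ∘ₗ ((1/2 : ℝ) • (Ric + J ∘ₗ Ric ∘ₗ J))
      = (1/4 : ℝ) • (B * B) := by
    rw [hBc, ← Module.End.mul_eq_comp, smul_mul_smul_comm]
    norm_num
  rw [goalE, map_smul, smul_eq_mul, final]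
  ring
end

section
/- With V, θ, and the semidirect product Lie algebra V ⋉_θ V as above, define g to be the product inner product on V ⊕ V, J(X,Y) := (Y, −X), and ω := g(J·,·). Then the 2-form ω is closed on the Lie algebra V ⋉_θ V; that is, ω([u,v],w) + ω([v,w],u) + ω([w,u],v) = 0 for all u,v,w ∈ V ⊕ V. -/
open scoped RealInnerProductSpace

/-- For the semidirect product `V ⋉_θ V` attached to an LSA structure on `V`
(with `θ(X) = −L(X)ᵗ`), the 2-form `ω((X,Y),(Z,W)) = ⟨Y,Z⟩ − ⟨X,W⟩` (which is
`g(J·,·)` for the product inner product and `J(X,Y) = (Y,−X)`) is closed. -/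
theorem stmt4 (V : Type*) [NormedAddCommGroup V] [InnerProductSpace ℝ V]
    [FiniteDimensional ℝ V]
    (mul : V →ₗ[ℝ] V →ₗ[ℝ] V)
    (hLSA : ∀ X Y Z : V,
      mul X (mul Y Z) - mul (mul X Y) Z = mul Y (mul X Z) - mul (mul Y X) Z)
    (θ : V → (V →ₗ[ℝ] V)) (hθ : ∀ X, θ X = -(LinearMap.adjoint (mul X)))
    (br : V × V → V × V → V × V)
    (hbr : ∀ X Y Z W : V,
      br (X, Y) (Z, W) = (mul X Z - mul Z X, θ X W - θ Z Y))
    (ω : V × V → V × V → ℝ)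
    (hω : ∀ u v : V × V, ω u v = ⟪u.2, v.1⟫ - ⟪u.1, v.2⟫) :
    ∀ u v w : V × V, ω (br u v) w + ω (br v w) u + ω (br w u) v = 0 := by
  intro u v w
  obtain ⟨X, Y⟩ := u
  obtain ⟨Z, W⟩ := v
  obtain ⟨P, Q⟩ := w
  simp only [hbr, hω, hθ, LinearMap.neg_apply, LinearMap.adjoint_inner_left,
    inner_sub_left, inner_sub_right, inner_neg_left, inner_neg_right]
  linarith [real_inner_comm W ((mul X) P), real_inner_comm Y ((mul Z) P),
    real_inner_comm ((mul X) Z) Q, real_inner_comm ((mul Z) X) Q,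
    real_inner_comm W ((mul P) X), real_inner_comm Y ((mul P) Z)]
end

section
/- Let g = ℝ^{2n} with basis e₁,…,e_{2n}, let ω = e¹∧e^{2n} + ω₁ where ω₁ is a nondegenerate 2-form on span(e₂,…,e_{2n−1}), and for a (2n−1)×(2n−1) matrix A define a bracket μ_A on g by declaring n = span(e₁,…,e_{2n−1}) abelian and [e_{2n}, X] = AX for X ∈ n. Then ω is closed with respect to μ_A if and only if Ae₁ ∈ ℝe₁ and the restriction A₁ of A to span(e₂,…,e_{2n−1}) composed with the projection onto span(e₂,…,e_{2n−1}) satisfies ω₁(A₁·,·) + ω₁(·,A₁·) = 0 (i.e. A₁ ∈ sp(ω₁)), where A(span(e₂,…,e_{2n−1})) ⊆ span(e₁,…,e_{2n−1}) with e₁-row arbitrary. -/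
/-- Almost abelian Lie algebras: model `g = n ⊕ ℝe_{2n}` with `n = ℝe₁ ⊕ V₁` an abelian
ideal and `[e_{2n}, x] = A x` for `x ∈ n`, and `ω = e¹ ∧ e^{2n} + ω₁`.  Then `ω` is closed
with respect to `μ_A` if and only if `A e₁ ∈ ℝ e₁` (i.e. the `V₁`-component of `A(1,0)`
vanishes) and the induced map `A₁` on `V₁` lies in `sp(ω₁)`. -/
theorem stmt5 (V₁ : Type*) [AddCommGroup V₁] [Module ℝ V₁]
    (ω₁ : LinearMap.BilinForm ℝ V₁)
    (halt : ∀ u : V₁, ω₁ u u = 0)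
    (hnondeg : ∀ u : V₁, (∀ v : V₁, ω₁ u v = 0) → u = 0)
    (A : (ℝ × V₁) →ₗ[ℝ] (ℝ × V₁))
    (br : ((ℝ × V₁) × ℝ) → ((ℝ × V₁) × ℝ) → ((ℝ × V₁) × ℝ))
    (hbr : ∀ X Y : (ℝ × V₁) × ℝ, br X Y = (X.2 • A Y.1 - Y.2 • A X.1, 0))
    (ω : ((ℝ × V₁) × ℝ) → ((ℝ × V₁) × ℝ) → ℝ)
    (hω : ∀ X Y : (ℝ × V₁) × ℝ, ω X Y = X.1.1 * Y.2 - Y.1.1 * X.2 + ω₁ X.1.2 Y.1.2) :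
    (∀ X Y Z : (ℝ × V₁) × ℝ, ω (br X Y) Z + ω (br Y Z) X + ω (br Z X) Y = 0) ↔
      ((A (1, 0)).2 = 0 ∧
        ∀ u v : V₁, ω₁ ((A (0, u)).2) v + ω₁ u ((A (0, v)).2) = 0) := by
  have hskew : ∀ u v : V₁, ω₁ u v = -ω₁ v u := by
    intro u v
    have h := halt (u + v)
    have hu := halt u
    have hv := halt v
    simp only [map_add, LinearMap.add_apply] at h
    linarith
  -- decomposition of A
  have hdec : ∀ (x : ℝ) (u : V₁), A (x, u) = x • A (1, 0) + A (0, u) := by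
    intro x u
    have : (x, u) = x • ((1:ℝ), (0:V₁)) + (0, u) := by
      simp [Prod.ext_iff]
    rw [this, map_add, map_smul]
  constructor
  · intro h
    have key : ∀ (x : ℝ) (u : V₁) (y : ℝ) (v : V₁),
        ω₁ (A (x, u)).2 v = ω₁ (A (y, v)).2 u := by
      intro x u y v
      have := h ((x, u), 0) ((y, v), 0) ((0, 0), 1)
      simp only [hbr, hω, smul_zero, zero_smul, one_smul, sub_zero, zero_sub, map_zero,
        LinearMap.zero_apply, map_neg, LinearMap.neg_apply, map_smul, map_sub,
        LinearMap.sub_apply, LinearMap.smul_apply] at this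
      -- this should be an equation among reals
      simp at this
      linarith [this]
    constructor
    · apply hnondeg
      intro v
      have := key 1 0 0 v
      simpa using this
    · intro u v
      have := key 0 u 0 v
      rw [hskew u (A (0, v)).2]
      linarith
  · rintro ⟨h1, h2⟩ X Y Z
    obtain ⟨⟨x, u⟩, s⟩ := X
    obtain ⟨⟨y, v⟩, t⟩ := Y
    obtain ⟨⟨z, w⟩, r⟩ := Z
    have hA2 : ∀ (a : ℝ) (p : V₁), (A (a, p)).2 = (A (0, p)).2 := by
      intro a p
      rw [hdec]; simp [h1]
    have hkey : ∀ (p q : V₁), ω₁ (A (0, p)).2 q = ω₁ (A (0, q)).2 p := by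
      intro p q
      have := h2 p q
      have hs := hskew p (A (0, q)).2
      linarith
    simp only [hbr, hω, Prod.smul_mk, Prod.fst, Prod.snd, Prod.mk.injEq]
    simp only [Prod.fst_sub, Prod.snd_sub, Prod.smul_fst, Prod.smul_snd, smul_eq_mul,
      map_sub, map_smul, LinearMap.sub_apply, LinearMap.smul_apply, smul_eq_mul]
    rw [hA2 x u, hA2 y v, hA2 z w]
    have k1 := hkey u v
    have k2 := hkey v w
    have k3 := hkey w u
    linear_combination s * k2 + t * k3 + r * k1
end

section
/- Let A₁ be a real (2n−2)×(2n−2) nilpotent matrix and suppose v ∈ ℝ^{2n−2} satisfies A₁v = 0 and the three conditions: (A₁ᵗ)²v + A₁A₁ᵗv = (3/2 |v|² + tr S(A₁)²)|v|⁻⁰·v (i.e. equation with a = 0), [A₁,[A₁,A₁ᵗ]] = [A₁,(vvᵗ)^{ac}], and |A₁ᵗv|² = (3/2 |v|² + tr S(A₁)²)|v|². Then |[A₁,A₁ᵗ] − vvᵗ|² = (−½|v|² − tr S(A₁)²)|v|², and consequently v = 0 and A₁ is normal. -/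
open Matrix

/-- The symmetric part of a real matrix. -/
noncomputable def symPart {m : ℕ} (B : Matrix (Fin m) (Fin m) ℝ) :
    Matrix (Fin m) (Fin m) ℝ := (1/2 : ℝ) • (B + Bᵀ)

/-- The commutator of two matrices. -/
def matComm {m : ℕ} (X Y : Matrix (Fin m) (Fin m) ℝ) :
    Matrix (Fin m) (Fin m) ℝ := X * Y - Y * X

/-- The anti-J-invariant part `½(M + J M J)` of a matrix. -/
noncomputable def acPart {m : ℕ} (J M : Matrix (Fin m) (Fin m) ℝ) :
    Matrix (Fin m) (Fin m) ℝ := (1/2 : ℝ) • (M + J * M * J)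

lemma trace_mul_transpose_nonneg' {m : ℕ} (M : Matrix (Fin m) (Fin m) ℝ) :
    0 ≤ Matrix.trace (M * Mᵀ) := by
  simp only [Matrix.trace, Matrix.diag, Matrix.mul_apply, Matrix.transpose_apply]
  exact Finset.sum_nonneg fun i _ => Finset.sum_nonneg fun j _ => mul_self_nonneg _

lemma eq_zero_of_trace_mul_transpose' {m : ℕ} (M : Matrix (Fin m) (Fin m) ℝ)
    (h : Matrix.trace (M * Mᵀ) = 0) : M = 0 := by
  simp only [Matrix.trace, Matrix.diag, Matrix.mul_apply, Matrix.transpose_apply] at h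
  ext i j
  have h1 : ∀ i ∈ Finset.univ, (0:ℝ) ≤ ∑ j : Fin m, M i j * M i j :=
    fun i _ => Finset.sum_nonneg fun j _ => mul_self_nonneg _
  have := (Finset.sum_eq_zero_iff_of_nonneg h1).mp h i (Finset.mem_univ i)
  have := (Finset.sum_eq_zero_iff_of_nonneg (fun j _ => mul_self_nonneg (M i j))).mp this j
    (Finset.mem_univ j)
  simpa [mul_self_eq_zero] using this

lemma trace_mul_vecMulVec' {m : ℕ} (X : Matrix (Fin m) (Fin m) ℝ) (v w : Fin m → ℝ) :
    Matrix.trace (X * vecMulVec v w) = w ⬝ᵥ X.mulVec v := by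
  simp only [Matrix.trace, Matrix.diag, Matrix.mul_apply, Matrix.vecMulVec_apply,
    dotProduct, Matrix.mulVec, Finset.mul_sum]
  congr 1; ext i; congr 1; ext j; ring

/-- If `A₁ ∈ sp(ω₁)` is nilpotent, `A₁v = 0`, and the soliton equations (with `a = 0`)
hold, then `|[A₁,A₁ᵗ] − vvᵗ|² = (−½|v|² − tr S(A₁)²)|v|²`; consequently `v = 0` and
`A₁` is normal. -/
theorem stmt6 (m : ℕ) (J₁ A₁ : Matrix (Fin m) (Fin m) ℝ) (v : Fin m → ℝ)
    (hJskew : J₁ᵀ = -J₁) (hJ2 : J₁ * J₁ = -1)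
    (hA₁sp : A₁ᵀ * J₁ + J₁ * A₁ = 0)
    (hnilp : IsNilpotent A₁)
    (hv : A₁.mulVec v = 0)
    (halg2 : A₁ᵀ.mulVec (A₁ᵀ.mulVec v) + A₁.mulVec (A₁ᵀ.mulVec v) =
      ((3/2) * (v ⬝ᵥ v) + Matrix.trace (symPart A₁ * symPart A₁)) • v)
    (halg3 : matComm A₁ (matComm A₁ A₁ᵀ) = matComm A₁ (acPart J₁ (vecMulVec v v)))
    (halg4 : (A₁ᵀ.mulVec v) ⬝ᵥ (A₁ᵀ.mulVec v) =
      ((3/2) * (v ⬝ᵥ v) + Matrix.trace (symPart A₁ * symPart A₁)) * (v ⬝ᵥ v)) :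
    Matrix.trace ((matComm A₁ A₁ᵀ - vecMulVec v v) * (matComm A₁ A₁ᵀ - vecMulVec v v)ᵀ) =
      (-(1/2) * (v ⬝ᵥ v) - Matrix.trace (symPart A₁ * symPart A₁)) * (v ⬝ᵥ v) ∧
    v = 0 ∧ A₁ * A₁ᵀ = A₁ᵀ * A₁ := by
  set C := matComm A₁ A₁ᵀ with hCdef
  set P := vecMulVec v v with hPdef
  set t := v ⬝ᵥ v with htdef
  set s := Matrix.trace (symPart A₁ * symPart A₁) with hsdef
  -- basic symmetries
  have hCt : Cᵀ = C := by
    simp [hCdef, matComm, Matrix.transpose_sub, Matrix.transpose_mul]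
  have hPt : Pᵀ = P := by
    ext i j; simp [hPdef, Matrix.vecMulVec_apply, mul_comm]
  -- J relations
  have hJA' : J₁ * A₁ = -(A₁ᵀ * J₁) := by
    have := hA₁sp; linear_combination (norm := (abel)) this
  have hJ2' : ∀ X : Matrix (Fin m) (Fin m) ℝ, J₁ * (J₁ * X) = -X := by
    intro X; rw [← mul_assoc, hJ2, neg_one_mul]
  have hJA : J₁ * A₁ * J₁ = A₁ᵀ := by
    rw [hJA', neg_mul, mul_assoc, hJ2, mul_neg_one, neg_neg]
  have hJAt : J₁ * A₁ᵀ * J₁ = A₁ := by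
    rw [← hJA]
    calc J₁ * (J₁ * A₁ * J₁) * J₁ = J₁ * (J₁ * (A₁ * (J₁ * J₁))) := by
          simp only [mul_assoc]
      _ = A₁ := by rw [hJ2, mul_neg_one, hJ2', neg_neg]
  have middle : ∀ X Y : Matrix (Fin m) (Fin m) ℝ,
      (J₁ * X * J₁) * (J₁ * Y * J₁) = -(J₁ * (X * Y) * J₁) := by
    intro X Y
    calc (J₁ * X * J₁) * (J₁ * Y * J₁) = J₁ * (X * (J₁ * (J₁ * (Y * J₁)))) := by
          simp only [mul_assoc]
      _ = -(J₁ * (X * Y) * J₁) := by rw [hJ2']; simp only [mul_neg, mul_assoc, neg_neg]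
  have e1 : J₁ * (A₁ * A₁ᵀ) * J₁ = -(A₁ᵀ * A₁) := by
    have h := middle A₁ A₁ᵀ; rw [hJA, hJAt] at h
    rw [← neg_eq_iff_eq_neg, ← h]
  have e2 : J₁ * (A₁ᵀ * A₁) * J₁ = -(A₁ * A₁ᵀ) := by
    have h := middle A₁ᵀ A₁; rw [hJA, hJAt] at h
    rw [← neg_eq_iff_eq_neg, ← h]
  have hJCJ : J₁ * C * J₁ = C := by
    rw [hCdef]
    show J₁ * (A₁ * A₁ᵀ - A₁ᵀ * A₁) * J₁ = _
    rw [Matrix.mul_sub, Matrix.sub_mul, e1, e2]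
    show -(A₁ᵀ * A₁) - -(A₁ * A₁ᵀ) = A₁ * A₁ᵀ - A₁ᵀ * A₁
    abel
  -- trace lemma for commutator against A₁ᵀ
  have tlem : ∀ X : Matrix (Fin m) (Fin m) ℝ,
      Matrix.trace (A₁ᵀ * (A₁ * X - X * A₁)) = - Matrix.trace (C * X) := by
    intro X
    rw [Matrix.mul_sub, Matrix.trace_sub, ← mul_assoc, ← mul_assoc]
    rw [show Matrix.trace (A₁ᵀ * X * A₁) = Matrix.trace (A₁ * A₁ᵀ * X) by
      rw [Matrix.trace_mul_comm (A₁ᵀ * X) A₁, ← mul_assoc]]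
    rw [hCdef]
    show _ = - Matrix.trace ((A₁ * A₁ᵀ - A₁ᵀ * A₁) * X)
    rw [Matrix.sub_mul, Matrix.trace_sub]
    ring
  -- Step A : trace (C*C) = trace (C*Q)
  have stepA : Matrix.trace (C * C) =
      Matrix.trace (C * acPart J₁ P) := by
    have h := congrArg (fun X => Matrix.trace (A₁ᵀ * X)) halg3
    simp only [matComm] at h
    rw [tlem, tlem] at h
    exact neg_injective h
  -- Step B : trace (C*Q) = trace (C*P)
  have stepB : Matrix.trace (C * acPart J₁ P) = Matrix.trace (C * P) := by
    have hcjpj : Matrix.trace (C * (J₁ * P * J₁)) = Matrix.trace (C * P) := by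
      calc Matrix.trace (C * (J₁ * P * J₁)) = Matrix.trace ((C * (J₁ * P)) * J₁) := by
            simp only [mul_assoc]
        _ = Matrix.trace (J₁ * (C * (J₁ * P))) := Matrix.trace_mul_comm _ _
        _ = Matrix.trace ((J₁ * C * J₁) * P) := by simp only [mul_assoc]
        _ = Matrix.trace (C * P) := by rw [hJCJ]
    simp only [acPart, smul_add, Matrix.mul_add, Matrix.mul_smul, Matrix.trace_add,
      Matrix.trace_smul, hcjpj, smul_eq_mul]
    ring
  -- Step C : trace (C*P) = |A₁ᵀ v|²
  have stepC : Matrix.trace (C * P) = (A₁ᵀ.mulVec v) ⬝ᵥ (A₁ᵀ.mulVec v) := by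
    rw [hPdef, trace_mul_vecMulVec']
    have hCv : C.mulVec v = A₁.mulVec (A₁ᵀ.mulVec v) := by
      rw [hCdef]
      show (A₁ * A₁ᵀ - A₁ᵀ * A₁).mulVec v = _
      rw [Matrix.sub_mulVec, ← Matrix.mulVec_mulVec, ← Matrix.mulVec_mulVec, hv]
      simp
    rw [hCv, Matrix.dotProduct_mulVec, ← Matrix.mulVec_transpose]
  -- Step D : trace (P*P) = t^2
  have stepD : Matrix.trace (P * P) = t * t := by
    rw [hPdef, trace_mul_vecMulVec']
    have : (vecMulVec v v).mulVec v = t • v := by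
      ext i
      simp only [Matrix.mulVec, dotProduct, Matrix.vecMulVec_apply, Pi.smul_apply,
        smul_eq_mul, htdef, Finset.sum_mul]
      congr 1; ext j; ring
    rw [this, dotProduct_smul, ← htdef, smul_eq_mul]
  -- main identity
  have main : Matrix.trace ((C - P) * (C - P)ᵀ) = (-(1/2) * t - s) * t := by
    rw [Matrix.transpose_sub, hCt, hPt, Matrix.sub_mul, Matrix.mul_sub, Matrix.mul_sub,
      Matrix.trace_sub, Matrix.trace_sub, Matrix.trace_sub,
      Matrix.trace_mul_comm P C, stepA, stepB, stepC, stepD, halg4]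
    ring
  -- s = (1/2) trace (A₁ * A₁ᵀ) ≥ 0
  have hnilA2 : IsNilpotent (A₁ * A₁) := by
    obtain ⟨n, hn⟩ := hnilp
    exact ⟨n, by rw [← pow_two, ← pow_mul, mul_comm 2 n, pow_mul, hn, zero_pow (by norm_num)]⟩
  have htr0 : Matrix.trace (A₁ * A₁) = 0 :=
    (Matrix.isNilpotent_trace_of_isNilpotent hnilA2).eq_zero
  have hs : s = (1/2) * Matrix.trace (A₁ * A₁ᵀ) := by
    rw [hsdef]
    simp only [symPart, Matrix.smul_mul, Matrix.mul_smul, Matrix.add_mul, Matrix.mul_add,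
      Matrix.trace_smul, Matrix.trace_add, smul_eq_mul]
    rw [show A₁ᵀ * A₁ᵀ = (A₁ * A₁)ᵀ by rw [Matrix.transpose_mul],
      Matrix.trace_transpose, htr0, Matrix.trace_mul_comm A₁ᵀ A₁]
    ring
  have hs_nonneg : 0 ≤ s := by
    rw [hs]; have := trace_mul_transpose_nonneg' A₁; linarith
  have ht_nonneg : 0 ≤ t := by
    rw [htdef]; exact Finset.sum_nonneg fun i _ => mul_self_nonneg _
  have hL_nonneg : 0 ≤ Matrix.trace ((C - P) * (C - P)ᵀ) := trace_mul_transpose_nonneg' _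
  have ht0 : t = 0 := by nlinarith [main]
  have hv0 : v = 0 := dotProduct_self_eq_zero.mp ht0
  refine ⟨main, hv0, ?_⟩
  have hP0 : P = 0 := by rw [hPdef, hv0]; ext i j; simp [Matrix.vecMulVec_apply]
  have hL0 : Matrix.trace ((C - P) * (C - P)ᵀ) = 0 := by rw [main, ht0]; ring
  have hC0 : C - P = 0 := eq_zero_of_trace_mul_transpose' _ hL0
  rw [hP0, sub_zero] at hC0
  have : A₁ * A₁ᵀ - A₁ᵀ * A₁ = 0 := hC0
  exact sub_eq_zero.mp this
end

section
/- Let A be a nonzero real m×m nilpotent matrix of the block form A = [[0,0],[C,0]] with C symmetric (blocks of equal size). Then A satisfies the soliton condition [A,[A,Aᵗ]] = −(|[A,Aᵗ]|²/|A|²)·A if and only if C³ = (tr C⁴ / tr C²)·C. In particular, when C is diagonal, the condition holds if and only if every diagonal entry of C lies in {0, t, −t} for a common t ≥ 0. -/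
open Matrix

/-- The block matrix `A = [[0,0],[C,0]]`. -/
def blockA {k : ℕ} (C : Matrix (Fin k) (Fin k) ℝ) :
    Matrix (Fin k ⊕ Fin k) (Fin k ⊕ Fin k) ℝ := Matrix.fromBlocks 0 0 C 0

lemma trace_fromBlocks' {k : ℕ} (A B C D : Matrix (Fin k) (Fin k) ℝ) :
    Matrix.trace (Matrix.fromBlocks A B C D) = Matrix.trace A + Matrix.trace D := by
  simp [Matrix.trace, Fintype.sum_sum_type, Matrix.fromBlocks, Matrix.diag]

/-- For the nilpotent block matrix `A = [[0,0],[C,0]]` with `C` symmetric and `A ≠ 0`,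
the nilsoliton condition `[A,[A,Aᵗ]] = −(|[A,Aᵗ]|²/|A|²)A` holds if and only if
`C³ = (tr C⁴ / tr C²)·C`; and when `C = diag(d)` this holds if and only if every
diagonal entry lies in `{0, t, −t}` for some common `t ≥ 0`. -/
theorem stmt8 (k : ℕ) (C : Matrix (Fin k) (Fin k) ℝ) (hC : Cᵀ = C) (hC0 : C ≠ 0) :
    (blockA C * (blockA C * (blockA C)ᵀ - (blockA C)ᵀ * blockA C) -
        (blockA C * (blockA C)ᵀ - (blockA C)ᵀ * blockA C) * blockA C =
      (-(Matrix.trace ((blockA C * (blockA C)ᵀ - (blockA C)ᵀ * blockA C) *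
            (blockA C * (blockA C)ᵀ - (blockA C)ᵀ * blockA C)ᵀ) /
          Matrix.trace (blockA C * (blockA C)ᵀ))) • blockA C
      ↔ C * C * C = (Matrix.trace (C ^ 4) / Matrix.trace (C ^ 2)) • C) ∧
    (∀ d : Fin k → ℝ, C = Matrix.diagonal d →
      (C * C * C = (Matrix.trace (C ^ 4) / Matrix.trace (C ^ 2)) • C ↔
        ∃ t : ℝ, 0 ≤ t ∧ ∀ i, d i = 0 ∨ d i = t ∨ d i = -t)) := by
  constructor
  · have hT : (blockA C)ᵀ = Matrix.fromBlocks 0 C 0 0 := by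
      simp [blockA, Matrix.fromBlocks_transpose, hC]
    have hcomm : blockA C * (blockA C)ᵀ - (blockA C)ᵀ * blockA C
        = Matrix.fromBlocks (-(C*C)) 0 0 (C*C) := by
      rw [hT]
      simp [blockA, Matrix.fromBlocks_multiply]
      rw [sub_eq_add_neg, Matrix.fromBlocks_neg, Matrix.fromBlocks_add]
      simp
    have hAAT : blockA C * (blockA C)ᵀ = Matrix.fromBlocks 0 0 0 (C*C) := by
      rw [hT]; simp [blockA, Matrix.fromBlocks_multiply]
    have hCCt : (C*C)ᵀ = C*C := by rw [Matrix.transpose_mul, hC]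
    rw [hcomm, hAAT]
    rw [show (Matrix.fromBlocks (-(C*C)) 0 0 (C*C))ᵀ = Matrix.fromBlocks (-(C*C)) 0 0 (C*C) by
      rw [Matrix.fromBlocks_transpose]; simp [Matrix.transpose_neg, hCCt]]
    rw [show Matrix.fromBlocks (-(C*C)) 0 0 (C*C) * Matrix.fromBlocks (-(C*C)) 0 0 (C*C)
        = Matrix.fromBlocks (C*C*(C*C)) 0 0 (C*C*(C*C)) by
      rw [Matrix.fromBlocks_multiply]; simp [Matrix.neg_mul, Matrix.mul_neg]]
    rw [trace_fromBlocks', trace_fromBlocks']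
    have hLHS : blockA C * Matrix.fromBlocks (-(C * C)) 0 0 (C * C) -
        Matrix.fromBlocks (-(C * C)) 0 0 (C * C) * blockA C
        = Matrix.fromBlocks 0 0 ((-2 : ℝ) • (C*C*C)) 0 := by
      simp only [blockA, Matrix.fromBlocks_multiply]
      rw [sub_eq_add_neg, Matrix.fromBlocks_neg, Matrix.fromBlocks_add]
      simp [Matrix.mul_neg, mul_assoc, two_smul]
    rw [hLHS]
    have hRHS : ∀ c : ℝ, c • blockA C = Matrix.fromBlocks 0 0 (c • C) 0 := by
      intro c
      simp [blockA, Matrix.fromBlocks_smul]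
    rw [hRHS]
    rw [Matrix.fromBlocks_inj]
    simp only [eq_self_iff_true, true_and, and_true]
    have h4 : C*C*(C*C) = C^4 := by rw [show (4:ℕ) = 2*2 from rfl, pow_mul, sq, sq]
    have h2 : C*C = C^2 := (sq C).symm
    rw [h4, h2, Matrix.trace_zero, zero_add]
    rw [show -(((C^4).trace + (C^4).trace) / (C^2).trace)
        = (-2 : ℝ) * ((C^4).trace / (C^2).trace) from by ring, ← smul_smul]
    rw [← h2]
    exact (smul_right_injective _ (by norm_num : (-2:ℝ) ≠ 0)).eq_iff
  · rintro d rfl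
    have hd : d ≠ 0 := by
      rintro rfl; exact hC0 Matrix.diagonal_zero
    obtain ⟨i0, hi0⟩ := Function.ne_iff.mp hd
    rw [Pi.zero_apply] at hi0
    have hsum2 : 0 < ∑ i, d i ^ 2 :=
      Finset.sum_pos' (fun j _ => sq_nonneg _) ⟨i0, Finset.mem_univ i0, by positivity⟩
    have htr4 : Matrix.trace ((Matrix.diagonal d) ^ 4) = ∑ i, d i ^ 4 := by
      rw [Matrix.diagonal_pow, Matrix.trace_diagonal]; rfl
    have htr2 : Matrix.trace ((Matrix.diagonal d) ^ 2) = ∑ i, d i ^ 2 := by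
      rw [Matrix.diagonal_pow, Matrix.trace_diagonal]; rfl
    set lam := (∑ i, d i ^ 4) / (∑ i, d i ^ 2) with hlam
    have hlam0 : 0 ≤ lam :=
      div_nonneg (Finset.sum_nonneg fun j _ => by positivity) hsum2.le
    have hmain : (Matrix.diagonal d * Matrix.diagonal d * Matrix.diagonal d =
        (Matrix.trace ((Matrix.diagonal d) ^ 4) / Matrix.trace ((Matrix.diagonal d) ^ 2)) •
          Matrix.diagonal d)
        ↔ ∀ i, d i * d i * d i = lam * d i := by
      rw [htr4, htr2, ← hlam, Matrix.diagonal_mul_diagonal, Matrix.diagonal_mul_diagonal,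
        ← Matrix.diagonal_smul, Matrix.diagonal_injective.eq_iff, funext_iff]
      simp [Pi.smul_apply, smul_eq_mul]
    rw [hmain]
    constructor
    · intro h
      refine ⟨Real.sqrt lam, Real.sqrt_nonneg _, fun i => ?_⟩
      rcases eq_or_ne (d i) 0 with h0 | h0
      · exact Or.inl h0
      · have hsq : d i ^ 2 = lam := by
          have h2 : d i * (d i * d i - lam) = 0 := by linear_combination h i
          rcases mul_eq_zero.mp h2 with h3 | h3
          · exact absurd h3 h0
          · rw [sq]; linarith
        have : |d i| = Real.sqrt lam := by rw [← hsq, Real.sqrt_sq_eq_abs]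
        exact Or.inr ((abs_eq (Real.sqrt_nonneg _)).mp this)
    · rintro ⟨t, ht, h⟩ i
      have hlamt : lam = t ^ 2 := by
        have h4 : ∀ j, d j ^ 4 = t ^ 2 * d j ^ 2 := by
          intro j; rcases h j with h' | h' | h' <;> rw [h'] <;> ring
        rw [hlam]
        rw [Finset.sum_congr rfl fun j _ => h4 j, ← Finset.mul_sum]
        field_simp
      rcases h i with h' | h' | h' <;> rw [h', hlamt] <;> ring
end

section
/- Consider the ODE system a' = −(a² + ¼b²)a, b' = −(a² + (5/4)b²)b with initial data a(0), b(0) ∈ ℝ. Then every solution exists for all t ∈ [0,∞) and (a(t), b(t)) → (0,0) as t → ∞. -/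
/-!
Along a solution, `E = a² + b²` satisfies `E' = -(2a⁴ + 5a²b²/2 + 5b⁴/2) ≤ -E²`. In particular `E`
is nonincreasing, so a solution starting at `(a₀, b₀)` stays in the box `[-R, R]²` with
`R² = a₀² + b₀²`. Composing the vector field with the nearest-point projection onto this box gives
a bounded, globally Lipschitz field; Picard–Lindelöf on each `[0, n]` and uniqueness glue its
solutions into one on `[0, ∞)`, which still has nonincreasing `E`, never leaves the box, and hence
solves the original system. Finally `E' ≤ -E²` forces `E → 0`: if `E ≥ ε` on `[0, ∞)` then `E`
would decrease at rate `ε²` forever.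
-/

open Set Filter

open scoped NNReal Topology

section GlobalSolution

variable {E : Type*} [NormedAddCommGroup E] [NormedSpace ℝ E] {G : E → E} {K : ℝ≥0}

theorem eqOn_Icc_of_hasDerivWithinAt_Icc (hG : LipschitzWith K G) {f g : ℝ → E} {T : ℝ}
    (hf : ∀ t ∈ Icc 0 T, HasDerivWithinAt f (G (f t)) (Icc 0 T) t)
    (hg : ∀ t ∈ Icc 0 T, HasDerivWithinAt g (G (g t)) (Icc 0 T) t) (h0 : f 0 = g 0) :
    EqOn f g (Icc 0 T) :=
  ODE_solution_unique (v := fun _ => G) (fun _ => hG)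
    (fun t ht => (hf t ht).continuousWithinAt)
    (fun t ht => (hf t (Ico_subset_Icc_self ht)).mono_of_mem_nhdsWithin (Icc_mem_nhdsGE_of_mem ht))
    (fun t ht => (hg t ht).continuousWithinAt)
    (fun t ht => (hg t (Ico_subset_Icc_self ht)).mono_of_mem_nhdsWithin (Icc_mem_nhdsGE_of_mem ht))
    h0

variable [CompleteSpace E] {C : ℝ}

theorem exists_hasDerivWithinAt_Icc (hG : LipschitzWith K G) (hC : ∀ x, ‖G x‖ ≤ C) (x₀ : E)
    {T : ℝ} (hT : 0 ≤ T) :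
    ∃ f : ℝ → E, f 0 = x₀ ∧ ∀ t ∈ Icc 0 T, HasDerivWithinAt f (G (f t)) (Icc 0 T) t := by
  have hPL : IsPicardLindelof (fun _ => G) (⟨0, le_rfl, hT⟩ : Icc 0 T) x₀
      (C.toNNReal * T.toNNReal) 0 C.toNNReal K := by
    refine ⟨fun _ _ => hG.lipschitzOnWith, fun _ _ => continuousOn_const,
      fun _ _ x _ => (hC x).trans (Real.le_coe_toNNReal C), ?_⟩
    simp [max_eq_left hT, Real.coe_toNNReal _ hT]
  exact hPL.exists_eq_forall_mem_Icc_hasDerivWithinAt₀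

theorem exists_hasDerivWithinAt_Ici (hG : LipschitzWith K G) (hC : ∀ x, ‖G x‖ ≤ C) (x₀ : E) :
    ∃ f : ℝ → E, f 0 = x₀ ∧ ∀ t ∈ Ici 0, HasDerivWithinAt f (G (f t)) (Ici 0) t := by
  choose sol hsol₀ hsol using fun n : ℕ => exists_hasDerivWithinAt_Icc hG hC x₀ n.cast_nonneg
  have hsol_eq {m n : ℕ} (hmn : m ≤ n) : EqOn (sol m) (sol n) (Icc 0 m) := by
    have hIcc : Icc (0 : ℝ) m ⊆ Icc 0 n := Icc_subset_Icc_right (Nat.cast_le.mpr hmn)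
    exact eqOn_Icc_of_hasDerivWithinAt_Icc hG (hsol m)
      (fun t ht => (hsol n t (hIcc ht)).mono hIcc) ((hsol₀ m).trans (hsol₀ n).symm)
  have hglue (n : ℕ) : EqOn (fun t => sol ⌈t⌉₊ t) (sol n) (Icc 0 n) := fun t ht =>
    hsol_eq (Nat.ceil_le.mpr ht.2) ⟨ht.1, Nat.le_ceil t⟩
  refine ⟨fun t => sol ⌈t⌉₊ t, by simp [hsol₀], fun t ht => ?_⟩
  have htn : t < (⌈t⌉₊ + 1 : ℕ) := by push_cast; linarith [Nat.le_ceil t]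
  have hmem : Icc (0 : ℝ) (⌈t⌉₊ + 1 : ℕ) ∈ 𝓝[Ici 0] t := by
    rw [← Ici_inter_Iic]; exact inter_mem_nhdsWithin _ (Iic_mem_nhds htn)
  have htIcc : t ∈ Icc (0 : ℝ) (⌈t⌉₊ + 1 : ℕ) := ⟨ht, htn.le⟩
  rw [hglue _ htIcc]
  exact ((hsol _ t htIcc).congr (hglue _) (hglue _ htIcc)).mono_of_mem_nhdsWithin hmem

end GlobalSolution

theorem ContDiff.exists_lipschitzWith_comp_and_bound {E F : Type*} [NormedAddCommGroup E]
    [NormedSpace ℝ E] [NormedAddCommGroup F] [NormedSpace ℝ F] {f : E → F} (hf : ContDiff ℝ 1 f)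
    {π : E → E} {Kπ : ℝ≥0} (hπ : LipschitzWith Kπ π) {s : Set E} (hs : IsCompact s)
    (hs_conv : Convex ℝ s) (hπs : ∀ x, π x ∈ s) :
    ∃ (K : ℝ≥0) (C : ℝ), LipschitzWith K (f ∘ π) ∧ ∀ x, ‖f (π x)‖ ≤ C := by
  obtain ⟨K, hK⟩ := hf.contDiffOn.exists_lipschitzOnWith one_ne_zero hs_conv hs
  obtain ⟨C, hC⟩ := hs.exists_bound_of_continuousOn hf.continuous.continuousOn
  exact ⟨K * Kπ, C, lipschitzOnWith_univ.mp (hK.comp hπ.lipschitzOnWith fun x _ => hπs x),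
    fun x => hC _ (hπs x)⟩

def clamp (R s : ℝ) : ℝ := max (-R) (min s R)

theorem lipschitzWith_clamp (R : ℝ) : LipschitzWith 1 (clamp R) :=
  (LipschitzWith.id.min_const R).const_max (-R)

theorem abs_clamp_le {R : ℝ} (hR : 0 ≤ R) (s : ℝ) : |clamp R s| ≤ R :=
  abs_le.mpr ⟨le_max_left _ _, max_le (by linarith) (min_le_right _ _)⟩

theorem clamp_of_abs_le {R s : ℝ} (hs : |s| ≤ R) : clamp R s = s := by
  rw [clamp, min_eq_left (abs_le.mp hs).2, max_eq_right (abs_le.mp hs).1]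

theorem mul_clamp_nonneg {R : ℝ} (hR : 0 ≤ R) (s : ℝ) : 0 ≤ s * clamp R s := by
  rcases le_total 0 s with hs | hs
  · exact mul_nonneg hs (le_max_of_le_right (le_min hs hR))
  · exact mul_nonneg_of_nonpos_of_nonpos hs (max_le (by linarith) ((min_le_left _ _).trans hs))

def clampBox (R : ℝ) (p : ℝ × ℝ) : ℝ × ℝ := (clamp R p.1, clamp R p.2)

theorem lipschitzWith_clampBox (R : ℝ) : LipschitzWith 1 (clampBox R) := by
  have h := ((lipschitzWith_clamp R).comp LipschitzWith.prod_fst).prodMk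
    ((lipschitzWith_clamp R).comp LipschitzWith.prod_snd)
  rwa [mul_one, max_self] at h

theorem clampBox_mem_closedBall {R : ℝ} (hR : 0 ≤ R) (p : ℝ × ℝ) :
    clampBox R p ∈ Metric.closedBall 0 R := by
  simpa [clampBox, Prod.norm_def] using ⟨abs_clamp_le hR p.1, abs_clamp_le hR p.2⟩

theorem hasDerivWithinAt_sq_add_sq {a b : ℝ → ℝ} {a' b' t : ℝ} {s : Set ℝ}
    (ha : HasDerivWithinAt a a' s t) (hb : HasDerivWithinAt b b' s t) :
    HasDerivWithinAt (fun t => a t ^ 2 + b t ^ 2) (2 * (a t * a' + b t * b')) s t :=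
  ((ha.fun_pow 2).add (hb.fun_pow 2)).congr_deriv (by norm_num; ring)

theorem antitoneOn_Ici_of_hasDerivWithinAt_nonpos {f f' : ℝ → ℝ} {x₀ : ℝ}
    (hf : ∀ t ∈ Ici x₀, HasDerivWithinAt f (f' t) (Ici x₀) t) (hf' : ∀ t ∈ Ici x₀, f' t ≤ 0) :
    AntitoneOn f (Ici x₀) := by
  refine antitoneOn_of_hasDerivWithinAt_nonpos (f' := f') (convex_Ici x₀)
    (fun t ht => (hf t ht).continuousWithinAt) (fun t ht => ?_) (fun t ht => ?_)
  · rw [interior_Ici] at ht ⊢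
    exact (hf t (Ioi_subset_Ici_self ht)).mono Ioi_subset_Ici_self
  · rw [interior_Ici] at ht
    exact hf' t (Ioi_subset_Ici_self ht)

theorem tendsto_zero_of_hasDerivWithinAt_le_neg_sq {f f' : ℝ → ℝ} (hf₀ : ∀ t ∈ Ici 0, 0 ≤ f t)
    (hf : ∀ t ∈ Ici 0, HasDerivWithinAt f (f' t) (Ici 0) t) (hf' : ∀ t ∈ Ici 0, f' t ≤ -f t ^ 2) :
    Tendsto f atTop (𝓝 0) := by
  have hanti : AntitoneOn f (Ici 0) :=
    antitoneOn_Ici_of_hasDerivWithinAt_nonpos hf fun t ht => (hf' t ht).trans (by nlinarith)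
  have hsmall : ∀ ε > 0, ∃ T ∈ Ici (0 : ℝ), f T < ε := by
    intro ε hε
    by_contra! hbig
    have hlin : AntitoneOn (fun t => f t + ε ^ 2 * t) (Ici 0) :=
      antitoneOn_Ici_of_hasDerivWithinAt_nonpos
        (fun t ht => (hf t ht).add ((hasDerivWithinAt_id t _).const_mul (ε ^ 2)))
        (fun t ht => by nlinarith [hf' t ht, hbig t ht])
    set T := f 0 / ε ^ 2 + 1
    have hT : 0 ≤ T := by have := hf₀ 0 self_mem_Ici; positivity
    have hεT : ε ^ 2 * T = f 0 + ε ^ 2 := by simp only [T]; field_simp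
    have hdec : f T + ε ^ 2 * T ≤ f 0 + ε ^ 2 * 0 := hlin self_mem_Ici hT hT
    nlinarith [hf₀ T hT]
  rw [Metric.tendsto_atTop]
  intro ε hε
  obtain ⟨T, hT, hfT⟩ := hsmall ε hε
  refine ⟨T, fun t ht => ?_⟩
  have ht₀ : t ∈ Ici (0 : ℝ) := le_trans hT ht
  rw [Real.dist_eq, sub_zero, abs_of_nonneg (hf₀ t ht₀)]
  exact (hanti hT ht₀ ht).trans_lt hfT

theorem tendsto_prodMk_zero_of_tendsto_sq_add_sq {α : Type*} {l : Filter α} {a b : α → ℝ}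
    (h : Tendsto (fun t => a t ^ 2 + b t ^ 2) l (𝓝 0)) : Tendsto (fun t => (a t, b t)) l (𝓝 0) := by
  refine squeeze_zero_norm (fun t => ?_) (by simpa using h.sqrt)
  rw [Prod.norm_def, Real.norm_eq_abs, Real.norm_eq_abs]
  exact max_le (Real.abs_le_sqrt (by nlinarith [sq_nonneg (b t)]))
    (Real.abs_le_sqrt (by nlinarith [sq_nonneg (a t)]))

noncomputable def bracketField (p : ℝ × ℝ) : ℝ × ℝ :=
  (-(p.1 ^ 2 + (1/4) * p.2 ^ 2) * p.1, -(p.1 ^ 2 + (5/4) * p.2 ^ 2) * p.2)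

def IsBracketFlow (a b : ℝ → ℝ) : Prop :=
  ∀ t ∈ Ici (0 : ℝ), HasDerivWithinAt a (bracketField (a t, b t)).1 (Ici 0) t ∧
    HasDerivWithinAt b (bracketField (a t, b t)).2 (Ici 0) t

theorem contDiff_bracketField : ContDiff ℝ 1 bracketField := by
  unfold bracketField
  fun_prop

theorem two_mul_inner_bracketField_le (p : ℝ × ℝ) :
    2 * (p.1 * (bracketField p).1 + p.2 * (bracketField p).2) ≤ -(p.1 ^ 2 + p.2 ^ 2) ^ 2 := by
  simp only [bracketField]
  nlinarith [sq_nonneg (p.1 * p.2), sq_nonneg (p.1 ^ 2), sq_nonneg (p.2 ^ 2)]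

theorem inner_bracketField_clampBox_nonpos {R : ℝ} (hR : 0 ≤ R) (p : ℝ × ℝ) :
    p.1 * (bracketField (clampBox R p)).1 + p.2 * (bracketField (clampBox R p)).2 ≤ 0 := by
  have h₁ := mul_clamp_nonneg hR p.1
  have h₂ := mul_clamp_nonneg hR p.2
  simp only [bracketField, clampBox]
  nlinarith [mul_nonneg (by positivity : 0 ≤ clamp R p.1 ^ 2 + 1/4 * clamp R p.2 ^ 2) h₁,
    mul_nonneg (by positivity : 0 ≤ clamp R p.1 ^ 2 + 5/4 * clamp R p.2 ^ 2) h₂]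

theorem exists_isBracketFlow (a₀ b₀ : ℝ) : ∃ a b, a 0 = a₀ ∧ b 0 = b₀ ∧ IsBracketFlow a b := by
  set R := √(a₀ ^ 2 + b₀ ^ 2)
  have hR : 0 ≤ R := Real.sqrt_nonneg _
  obtain ⟨K, C, hK, hC⟩ := contDiff_bracketField.exists_lipschitzWith_comp_and_bound
    (lipschitzWith_clampBox R) (isCompact_closedBall 0 R) (convex_closedBall 0 R)
    (clampBox_mem_closedBall hR)
  obtain ⟨f, hf₀, hf⟩ := exists_hasDerivWithinAt_Ici hK hC (a₀, b₀)
  have ha (t) (ht : t ∈ Ici (0 : ℝ)) :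
      HasDerivWithinAt (fun t => (f t).1) (bracketField (clampBox R (f t))).1 (Ici 0) t :=
    (ContinuousLinearMap.fst ℝ ℝ ℝ).hasFDerivAt.comp_hasDerivWithinAt t (hf t ht)
  have hb (t) (ht : t ∈ Ici (0 : ℝ)) :
      HasDerivWithinAt (fun t => (f t).2) (bracketField (clampBox R (f t))).2 (Ici 0) t :=
    (ContinuousLinearMap.snd ℝ ℝ ℝ).hasFDerivAt.comp_hasDerivWithinAt t (hf t ht)
  have hanti : AntitoneOn (fun t => (f t).1 ^ 2 + (f t).2 ^ 2) (Ici 0) :=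
    antitoneOn_Ici_of_hasDerivWithinAt_nonpos
      (fun t ht => hasDerivWithinAt_sq_add_sq (ha t ht) (hb t ht))
      (fun t ht => by linarith [inner_bracketField_clampBox_nonpos hR (f t)])
  have hbox (t) (ht : t ∈ Ici (0 : ℝ)) : clampBox R (f t) = f t := by
    have hE : (f t).1 ^ 2 + (f t).2 ^ 2 ≤ a₀ ^ 2 + b₀ ^ 2 := by
      simpa [hf₀] using hanti self_mem_Ici ht ht
    exact Prod.ext (clamp_of_abs_le (Real.abs_le_sqrt (by nlinarith [sq_nonneg (f t).2])))
      (clamp_of_abs_le (Real.abs_le_sqrt (by nlinarith [sq_nonneg (f t).1])))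
  refine ⟨fun t => (f t).1, fun t => (f t).2, by simp [hf₀], by simp [hf₀], fun t ht => ?_⟩
  have ha' := ha t ht
  have hb' := hb t ht
  rw [hbox t ht] at ha' hb'
  exact ⟨ha', hb'⟩

theorem IsBracketFlow.tendsto_zero {a b : ℝ → ℝ} (h : IsBracketFlow a b) :
    Tendsto (fun t => (a t, b t)) atTop (𝓝 0) :=
  tendsto_prodMk_zero_of_tendsto_sq_add_sq <|
    tendsto_zero_of_hasDerivWithinAt_le_neg_sq (fun t _ => by positivity)
      (fun t ht => hasDerivWithinAt_sq_add_sq (h t ht).1 (h t ht).2)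
      (fun t _ => by linarith [two_mul_inner_bracketField_le (a t, b t)])

/-- The ODE system `a' = −(a² + ¼b²)a`, `b' = −(a² + (5/4)b²)b`: for any initial data
there is a solution on all of `[0,∞)`, and every solution on `[0,∞)` converges to
`(0,0)` as `t → ∞`. -/
theorem stmt9 (a₀ b₀ : ℝ) :
    (∃ a b : ℝ → ℝ, a 0 = a₀ ∧ b 0 = b₀ ∧
      ∀ t ∈ Ici (0 : ℝ),
        HasDerivWithinAt a (-((a t) ^ 2 + (1/4) * (b t) ^ 2) * a t) (Ici 0) t ∧
        HasDerivWithinAt b (-((a t) ^ 2 + (5/4) * (b t) ^ 2) * b t) (Ici 0) t) ∧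
    (∀ a b : ℝ → ℝ, a 0 = a₀ → b 0 = b₀ →
      (∀ t ∈ Ici (0 : ℝ),
        HasDerivWithinAt a (-((a t) ^ 2 + (1/4) * (b t) ^ 2) * a t) (Ici 0) t ∧
        HasDerivWithinAt b (-((a t) ^ 2 + (5/4) * (b t) ^ 2) * b t) (Ici 0) t) →
      Tendsto (fun t => (a t, b t)) atTop (nhds ((0 : ℝ), (0 : ℝ)))) :=
  ⟨exists_isBracketFlow a₀ b₀, fun _ _ _ _ h => IsBracketFlow.tendsto_zero h⟩
end
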